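/- arXiv:1911.07313 — 2 statements merged into one kernel-verified Lean document; each statement's English description precedes it below -/
import Mathlib

section
/- The function d(z) = E[W⁻ W⁺ φ_{τ(W⁻)}(W⁻ z)] − 1 is finite and continuous on the open interval (0,∞). -/
open MeasureTheory Filter Set Topology

open Classical in
/-- `phi1 l x = P(Poi(x) = l - 1)` for integer `l ≥ 1`, and `0` for `l ∈ {0, ∞}`. -/
noncomputable def phi1 (l : WithTop ℕ) (x : ℝ) : ℝ :=
  ∑' j : ℕ, if (j : WithTop ℕ) + 1 = l then Real.exp (-x) * x ^ j / (Nat.factorial j : ℝ) else 0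

/-- `d z = E[W⁻ W⁺ φ_T(W⁻ z)] - 1`. -/
noncomputable def dCont {Ω : Type*} [MeasureSpace Ω] (Wm Wp : Ω → ℝ) (T : Ω → WithTop ℕ)
    (z : ℝ) : ℝ :=
  (∫ ω, Wm ω * Wp ω * phi1 (T ω) (Wm ω * z)) - 1

lemma phi1_coe_nat (n : ℕ) (x : ℝ) :
    phi1 (n : WithTop ℕ) x =
      if n = 0 then 0
      else Real.exp (-x) * x ^ (n - 1) / (Nat.factorial (n - 1) : ℝ) := by
  classical
  unfold phi1
  have hkey : ∀ (j k : ℕ), ((j : WithTop ℕ) + 1 = (k : WithTop ℕ)) ↔ j + 1 = k := by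
    intro j k
    constructor
    · intro h
      have : ((j + 1 : ℕ) : WithTop ℕ) = ((k : ℕ) : WithTop ℕ) := by push_cast; exact h
      exact_mod_cast this
    · intro h
      have : ((j + 1 : ℕ) : WithTop ℕ) = ((k : ℕ) : WithTop ℕ) := by exact_mod_cast h
      push_cast at this; exact this
  rcases n with _ | m
  · rw [if_pos rfl]
    have : ∀ j : ℕ, (if ((j : WithTop ℕ) + 1 = ((0:ℕ) : WithTop ℕ)) then Real.exp (-x) * x ^ j / (Nat.factorial j : ℝ) else 0) = 0 := by
      intro j
      rw [if_neg]
      intro h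
      exact Nat.succ_ne_zero j ((hkey j 0).1 h)
    simp only [this, tsum_zero]
  · rw [if_neg (Nat.succ_ne_zero m)]
    rw [tsum_eq_single m]
    · rw [if_pos ((hkey m (m+1)).2 rfl)]
      simp
    · intro j hj
      rw [if_neg]
      intro h
      exact hj (by have := (hkey j (m+1)).1 h; omega)

lemma phi1_nonneg (n : ℕ) (x : ℝ) (hx : 0 ≤ x) : 0 ≤ phi1 (n : WithTop ℕ) x := by
  rw [phi1_coe_nat]
  split
  · exact le_refl 0
  · positivity

lemma pow_div_fact_le_exp (x : ℝ) (hx : 0 ≤ x) (j : ℕ) :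
    x ^ j / (Nat.factorial j : ℝ) ≤ Real.exp x := by
  calc x ^ j / (Nat.factorial j : ℝ)
      ≤ ∑ i ∈ Finset.range (j + 1), x ^ i / (Nat.factorial i : ℝ) := by
        exact Finset.single_le_sum (f := fun i => x ^ i / (Nat.factorial i : ℝ))
          (fun i _ => by positivity) (Finset.self_mem_range_succ j)
    _ ≤ Real.exp x := Real.sum_le_exp_of_nonneg hx _

lemma phi1_le_one (n : ℕ) (x : ℝ) (hx : 0 ≤ x) : phi1 (n : WithTop ℕ) x ≤ 1 := by
  rw [phi1_coe_nat]
  split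
  · norm_num
  · rw [mul_div_assoc]
    calc Real.exp (-x) * (x ^ (n - 1) / (Nat.factorial (n - 1) : ℝ))
        ≤ Real.exp (-x) * Real.exp x := by
          exact mul_le_mul_of_nonneg_left (pow_div_fact_le_exp x hx _) (Real.exp_nonneg _)
      _ = 1 := by rw [← Real.exp_add]; simp

lemma phi1_le_two_pow (n : ℕ) (x : ℝ) (hx : 0 ≤ x) :
    phi1 (n : WithTop ℕ) x ≤ 2 ^ n * Real.exp (-x / 2) := by
  rw [phi1_coe_nat]
  split
  · positivity
  · have key : x ^ (n - 1) / (Nat.factorial (n - 1) : ℝ)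
        ≤ 2 ^ (n - 1) * Real.exp (x / 2) := by
      have h := pow_div_fact_le_exp (x / 2) (by linarith) (n - 1)
      have hx2 : x ^ (n - 1) = 2 ^ (n - 1) * (x / 2) ^ (n - 1) := by
        rw [div_pow, ← mul_div_assoc, mul_comm, mul_div_assoc]
        rw [div_self (by positivity), mul_one]
      rw [hx2, mul_div_assoc]
      exact mul_le_mul_of_nonneg_left h (by positivity)
    rw [mul_div_assoc]
    calc Real.exp (-x) * (x ^ (n - 1) / (Nat.factorial (n - 1) : ℝ))
        ≤ Real.exp (-x) * (2 ^ (n - 1) * Real.exp (x / 2)) :=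
          mul_le_mul_of_nonneg_left key (Real.exp_nonneg _)
      _ = 2 ^ (n - 1) * Real.exp (-x / 2) := by
          rw [← mul_assoc, mul_comm (Real.exp (-x)), mul_assoc, ← Real.exp_add]
          ring_nf
      _ ≤ 2 ^ n * Real.exp (-x / 2) := by
          apply mul_le_mul_of_nonneg_right _ (Real.exp_nonneg _)
          exact pow_le_pow_right₀ (by norm_num) (Nat.sub_le n 1)

/-- Key uniform bound: for fixed `a > 0`, `w * phi1 (τ w) (w z)` is bounded
uniformly over `w ≥ 0` and `z ≥ a`. -/
lemma exists_uniform_bound (τ : ℝ → ℕ)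
    (hτ : Tendsto (fun w : ℝ => (τ w : ℝ) / w) atTop (𝓝 0)) (a : ℝ) (ha : 0 < a) :
    ∃ C : ℝ, 0 < C ∧ ∀ w, 0 ≤ w → ∀ z, a ≤ z →
      w * phi1 ((τ w : ℕ) : WithTop ℕ) (w * z) ≤ C := by
  have hlog2 : (0 : ℝ) < Real.log 2 := Real.log_pos (by norm_num)
  set ε : ℝ := a / (4 * Real.log 2) with hε
  have hεpos : 0 < ε := by positivity
  have hev : ∀ᶠ w in atTop, (τ w : ℝ) / w < ε :=
    hτ.eventually (Filter.Tendsto.eventually_lt_const hεpos tendsto_id) |>.mono fun _ h => h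
  rw [eventually_atTop] at hev
  obtain ⟨M, hM⟩ := hev
  refine ⟨max M 1 + 4 / a, by positivity, fun w hw z hz => ?_⟩
  have hwz : 0 ≤ w * z := mul_nonneg hw (le_trans ha.le hz)
  by_cases hwM : w ≤ max M 1
  · calc w * phi1 ((τ w : ℕ) : WithTop ℕ) (w * z)
        ≤ w * 1 := mul_le_mul_of_nonneg_left (phi1_le_one _ _ hwz) hw
      _ = w := mul_one w
      _ ≤ max M 1 + 4 / a := by
          have : (0:ℝ) < 4 / a := by positivity
          linarith
  · push_neg at hwM
    have hw1 : (1 : ℝ) < w := lt_of_le_of_lt (le_max_right M 1) hwM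
    have hw0 : (0 : ℝ) < w := lt_trans one_pos hw1
    have hτw : (τ w : ℝ) < ε * w := by
      have := hM w (le_of_lt (lt_of_le_of_lt (le_max_left M 1) hwM))
      calc (τ w : ℝ) = (τ w : ℝ) / w * w := by field_simp
        _ < ε * w := by exact mul_lt_mul_of_pos_right this hw0
    have h2pow : (2 : ℝ) ^ (τ w) ≤ Real.exp (w * a / 4) := by
      rw [← Real.rpow_natCast 2 (τ w), ← Real.exp_log (by norm_num : (0:ℝ) < 2),
        ← Real.exp_mul]
      apply Real.exp_le_exp.2
      calc Real.log 2 * (τ w : ℝ) ≤ Real.log 2 * (ε * w) :=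
            mul_le_mul_of_nonneg_left hτw.le hlog2.le
        _ = w * a / 4 := by rw [hε]; field_simp
    have hphi : phi1 ((τ w : ℕ) : WithTop ℕ) (w * z)
        ≤ Real.exp (w * a / 4) * Real.exp (-(w * a) / 2) := by
      calc phi1 ((τ w : ℕ) : WithTop ℕ) (w * z)
          ≤ 2 ^ (τ w) * Real.exp (-(w * z) / 2) := phi1_le_two_pow _ _ hwz
        _ ≤ Real.exp (w * a / 4) * Real.exp (-(w * a) / 2) := by
            apply mul_le_mul h2pow _ (Real.exp_nonneg _) (Real.exp_nonneg _)
            apply Real.exp_le_exp.2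
            have : w * a ≤ w * z := mul_le_mul_of_nonneg_left hz hw0.le
            linarith
    calc w * phi1 ((τ w : ℕ) : WithTop ℕ) (w * z)
        ≤ w * (Real.exp (w * a / 4) * Real.exp (-(w * a) / 2)) :=
          mul_le_mul_of_nonneg_left hphi hw0.le
      _ = w * Real.exp (-(w * a / 4)) := by
          rw [← Real.exp_add]; ring_nf
      _ ≤ 4 / a := by
          have hu : 0 < w * a / 4 := by positivity
          have h1 : w * a / 4 ≤ Real.exp (w * a / 4) := by
            have := Real.add_one_le_exp (w * a / 4); linarith
          have h2 : Real.exp (-(w * a / 4)) = (Real.exp (w * a / 4))⁻¹ := by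
            rw [Real.exp_neg]
          rw [h2]
          rw [← div_eq_mul_inv, div_le_div_iff₀ (Real.exp_pos _) ha]
          calc w * a = 4 * (w * a / 4) := by ring
            _ ≤ 4 * Real.exp (w * a / 4) := by linarith
      _ ≤ max M 1 + 4 / a := by
          have : (0:ℝ) ≤ max M 1 := le_trans zero_le_one (le_max_right M 1)
          linarith

lemma integrand_measurable {Ω : Type*} [MeasureSpace Ω]
    (Wm Wp : Ω → ℝ) (τ : ℝ → ℕ)
    (hWm_meas : Measurable Wm) (hWp_meas : Measurable Wp) (hτ_meas : Measurable τ)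
    (z : ℝ) :
    Measurable (fun ω => Wm ω * Wp ω * phi1 ((τ (Wm ω) : ℕ) : WithTop ℕ) (Wm ω * z)) := by
  have hσ : Measurable fun ω => τ (Wm ω) := hτ_meas.comp hWm_meas
  have hphi : Measurable fun ω => phi1 ((τ (Wm ω) : ℕ) : WithTop ℕ) (Wm ω * z) := by
    simp only [phi1_coe_nat]
    apply Measurable.ite (hσ (MeasurableSet.singleton 0)) measurable_const
    apply Measurable.div
    · exact (Real.measurable_exp.comp (hWm_meas.mul_const z).neg).mul
        ((hWm_meas.mul_const z).pow (hσ.sub measurable_const))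
    · exact (measurable_from_nat (f := fun n => ((Nat.factorial n : ℕ) : ℝ))).comp
        (hσ.sub measurable_const)
  exact (hWm_meas.mul hWp_meas).mul hphi

lemma phi1_continuous (n : ℕ) (w : ℝ) :
    Continuous fun z : ℝ => phi1 ((n : ℕ) : WithTop ℕ) (w * z) := by
  simp only [phi1_coe_nat]
  split
  · exact continuous_const
  · apply Continuous.div
    · exact ((Real.continuous_exp.comp (continuous_const.mul continuous_id).neg).mul
        ((continuous_const.mul continuous_id).pow _))
    · exact continuous_const
    · intro z
      exact_mod_cast Nat.cast_ne_zero.2 (Nat.factorial_ne_zero _)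

/-- With `T = τ(W⁻)` for `τ : [0,∞) → ℕ₀` satisfying `τ(w)/w → 0` as `w → ∞`, the function
`d(z) = E[W⁻ W⁺ φ_{τ(W⁻)}(W⁻ z)] - 1` is finite (i.e. the defining expectation is that of an
integrable random variable) and continuous on `(0,∞)`. -/
theorem stmt_1 {Ω : Type*} [MeasureSpace Ω] [IsProbabilityMeasure (volume : Measure Ω)]
    (Wm Wp : Ω → ℝ) (τ : ℝ → ℕ)
    (hWm_nonneg : ∀ ω, 0 ≤ Wm ω) (hWp_nonneg : ∀ ω, 0 ≤ Wp ω)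
    (hWm_meas : Measurable Wm) (hWp_meas : Measurable Wp) (hτ_meas : Measurable τ)
    (hWp_int : Integrable Wp)
    (hτ : Tendsto (fun w : ℝ => (τ w : ℝ) / w) atTop (𝓝 0)) :
    (∀ z : ℝ, 0 < z →
      Integrable (fun ω => Wm ω * Wp ω * phi1 ((τ (Wm ω) : ℕ) : WithTop ℕ) (Wm ω * z))) ∧
    ContinuousOn (dCont Wm Wp (fun ω => ((τ (Wm ω) : ℕ) : WithTop ℕ))) (Set.Ioi 0) := by
  have hbound : ∀ a : ℝ, 0 < a → ∃ C : ℝ, 0 < C ∧ ∀ z, a ≤ z → ∀ ω,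
      ‖Wm ω * Wp ω * phi1 ((τ (Wm ω) : ℕ) : WithTop ℕ) (Wm ω * z)‖ ≤ C * Wp ω := by
    intro a ha
    obtain ⟨C, hC, hCb⟩ := exists_uniform_bound τ hτ a ha
    refine ⟨C, hC, fun z hz ω => ?_⟩
    have hx : 0 ≤ Wm ω * z := mul_nonneg (hWm_nonneg ω) (le_trans ha.le hz)
    have hphi := phi1_nonneg (τ (Wm ω)) (Wm ω * z) hx
    rw [Real.norm_eq_abs, abs_of_nonneg
      (mul_nonneg (mul_nonneg (hWm_nonneg ω) (hWp_nonneg ω)) hphi)]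
    calc Wm ω * Wp ω * phi1 ((τ (Wm ω) : ℕ) : WithTop ℕ) (Wm ω * z)
        = (Wm ω * phi1 ((τ (Wm ω) : ℕ) : WithTop ℕ) (Wm ω * z)) * Wp ω := by ring
      _ ≤ C * Wp ω := mul_le_mul_of_nonneg_right
          (hCb (Wm ω) (hWm_nonneg ω) z hz) (hWp_nonneg ω)
  have hint : ∀ z : ℝ, 0 < z →
      Integrable (fun ω => Wm ω * Wp ω * phi1 ((τ (Wm ω) : ℕ) : WithTop ℕ) (Wm ω * z)) := by
    intro z hz
    obtain ⟨C, hC, hCb⟩ := hbound z hz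
    exact ((hWp_int.const_mul C).mono
      (integrand_measurable Wm Wp τ hWm_meas hWp_meas hτ_meas z).aestronglyMeasurable
      (Filter.Eventually.of_forall fun ω => by
        calc ‖Wm ω * Wp ω * phi1 ((τ (Wm ω) : ℕ) : WithTop ℕ) (Wm ω * z)‖
            ≤ C * Wp ω := hCb z le_rfl ω
          _ ≤ ‖C * Wp ω‖ := le_abs_self _))
  refine ⟨hint, ?_⟩
  intro z₀ hz₀
  apply ContinuousAt.continuousWithinAt
  have hz₀' : (0 : ℝ) < z₀ := hz₀
  obtain ⟨C, hC, hCb⟩ := hbound (z₀ / 2) (by linarith)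
  have hcont : ContinuousAt
      (fun z => ∫ ω, Wm ω * Wp ω * phi1 ((τ (Wm ω) : ℕ) : WithTop ℕ) (Wm ω * z)) z₀ := by
    apply continuousAt_of_dominated (bound := fun ω => C * Wp ω)
    · exact Filter.Eventually.of_forall fun z =>
        (integrand_measurable Wm Wp τ hWm_meas hWp_meas hτ_meas z).aestronglyMeasurable
    · filter_upwards [eventually_ge_nhds (show z₀ / 2 < z₀ by linarith)] with z hz
      exact Filter.Eventually.of_forall fun ω => hCb z hz ω
    · exact hWp_int.const_mul C
    · exact Filter.Eventually.of_forall fun ω =>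
        ((continuous_const.mul
          (phi1_continuous (τ (Wm ω)) (Wm ω))).continuousAt)
  exact (hcont.sub continuousAt_const)
end

section
/- There exists a smallest joint root ẑ ∈ [0,∞)^V of the functions f^{r,α,β}, (r,α,β) ∈ V, in the sense that ẑ is a joint root and ẑ ≤ z̄ componentwise for every joint root z̄. Moreover, z* is a joint root of the functions f^{r,α,β}, and both ẑ ∈ P₀ and z* ∈ P₀. -/
/-!
The joint roots are the fixed points of the map `Φ z = E[W⁺ ψ(…; C) 1{A = β}]` on the orthant
`[0,∞)^V`, and `P` is the set of its post-fixed points `z ≤ Φ z`. Since `ψ(·; l)` is the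
probability of an upper set of `ℕ^R` under independent Poisson laws, it is increasing in the
rates; `Φ` is therefore monotone, continuous by dominated convergence, and bounded by `E[W⁺]`.
Monotonicity makes `P₀` invariant under `Φ` (the box `[z, Φ z]` is a connected subset of `P`)
and closed under `⊔`; continuity makes it closed. Hence the supremum `z*` of `P₀` lies in `P₀`,
and `z* ≤ Φ z* ≤ z*`. The iterates `Φⁿ 0` increase inside `P₀` to a fixed point `ẑ`, which lies
below every nonnegative fixed point by induction.
-/

open MeasureTheory Filter Set Topology

open Classical in
/-- Probability that a Poisson(q) random variable equals `k`. -/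
noncomputable def poisProb (q : ℝ) (k : ℕ) : ℝ := Real.exp (-q) * q ^ k / (Nat.factorial k : ℝ)

open Classical in
/-- `psiMulti q l = P(∑_{s=1}^R s · Q_s ≥ l)` for independent `Q_s ~ Poi(q s)`;
in particular it equals `1` for `l ≤ 0` and `0` for `l = ∞`. -/
noncomputable def psiMulti {R : ℕ} (q : Fin R → ℝ) (l : WithTop ℤ) : ℝ :=
  ∑' k : Fin R → ℕ,
    if l ≤ ((((∑ s : Fin R, ((s : ℕ) + 1) * k s) : ℕ) : ℤ) : WithTop ℤ) then
      ∏ s, poisProb (q s) (k s)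
    else 0

/-- Embedding of `ℕ ∪ {∞}` into `ℤ ∪ {∞}`. -/
noncomputable def natCastTop (c : WithTop ℕ) : WithTop ℤ := WithTop.map (fun n : ℕ => (n : ℤ)) c

/-- The function `f^{r,α,β}(z) = E[W^{+,r,α} ψ(∑_γ W^{-,1,γ} z^{1,β,γ}, …, ∑_γ W^{-,R,γ} z^{R,β,γ}; C)
1{A=β}] − z^{r,α,β}` (with `v = (r,α,β)`). -/
noncomputable def fV {Ω : Type*} [MeasureSpace Ω] {R T : ℕ}
    (Wm Wp : Ω → Fin R → Fin T → ℝ) (C : Ω → WithTop ℕ) (A : Ω → Fin T)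
    (v : Fin R × Fin T × Fin T) (z : Fin R × Fin T × Fin T → ℝ) : ℝ :=
  (∫ ω, if A ω = v.2.2 then
      Wp ω v.1 v.2.1 *
        psiMulti (fun s => ∑ γ, Wm ω s γ * z (s, v.2.2, γ)) (natCastTop (C ω))
    else 0) - z v

/-- The function `g(z) = ∑_β E[S ψ(…; C) 1{A=β}]`. -/
noncomputable def gV {Ω : Type*} [MeasureSpace Ω] {R T : ℕ}
    (Wm : Ω → Fin R → Fin T → ℝ) (S : Ω → ℝ) (C : Ω → WithTop ℕ) (A : Ω → Fin T)
    (z : Fin R × Fin T × Fin T → ℝ) : ℝ :=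
  ∑ β, ∫ ω, if A ω = β then
      S ω * psiMulti (fun s => ∑ γ, Wm ω s γ * z (s, β, γ)) (natCastTop (C ω))
    else 0

/-- The nonnegative orthant `[0,∞)^V`. -/
def nonnegV (R T : ℕ) : Set ((Fin R × Fin T × Fin T) → ℝ) := {z | ∀ v, 0 ≤ z v}

/-- The set `P = ∩_{(r,α,β) ∈ V} {z ∈ [0,∞)^V : f^{r,α,β}(z) ≥ 0}`. -/
noncomputable def PsetV {Ω : Type*} [MeasureSpace Ω] {R T : ℕ}
    (Wm Wp : Ω → Fin R → Fin T → ℝ) (C : Ω → WithTop ℕ) (A : Ω → Fin T) :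
    Set ((Fin R × Fin T × Fin T) → ℝ) :=
  {z | z ∈ nonnegV R T ∧ ∀ v, 0 ≤ fV Wm Wp C A v z}

/-- `P₀`, the largest connected subset of `P` containing `0`. -/
noncomputable def P0V {Ω : Type*} [MeasureSpace Ω] {R T : ℕ}
    (Wm Wp : Ω → Fin R → Fin T → ℝ) (C : Ω → WithTop ℕ) (A : Ω → Fin T) :
    Set ((Fin R × Fin T × Fin T) → ℝ) :=
  connectedComponentIn (PsetV Wm Wp C A) 0

/-- `z*`, defined by `(z*)^{r,α,β} = sup_{z ∈ P₀} z^{r,α,β}`. -/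
noncomputable def zStarV {Ω : Type*} [MeasureSpace Ω] {R T : ℕ}
    (Wm Wp : Ω → Fin R → Fin T → ℝ) (C : Ω → WithTop ℕ) (A : Ω → Fin T) :
    (Fin R × Fin T × Fin T) → ℝ :=
  fun v => sSup ((fun z => z v) '' P0V Wm Wp C A)

open Function

theorem IsClosed.connectedComponentIn {α : Type*} [TopologicalSpace α] {F : Set α}
    (hF : IsClosed F) (x : α) : IsClosed (_root_.connectedComponentIn F x) := by
  by_cases hx : x ∈ F
  · exact isClosed_of_closure_subset <|
      isPreconnected_connectedComponentIn.closure.subset_connectedComponentIn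
        (subset_closure (mem_connectedComponentIn hx))
        (closure_minimal (connectedComponentIn_subset F x) hF)
  · rw [connectedComponentIn_eq_empty hx]
    exact isClosed_empty

theorem IsPreconnected.subset_connectedComponentIn_of_mem {α : Type*} [TopologicalSpace α]
    {s F : Set α} {x y : α} (hs : IsPreconnected s) (hsF : s ⊆ F) (hy : y ∈ s)
    (hyx : y ∈ _root_.connectedComponentIn F x) : s ⊆ _root_.connectedComponentIn F x := by
  rw [connectedComponentIn_eq hyx]
  exact hs.subset_connectedComponentIn hy hsF

theorem IsClosed.isLUB_mem_of_directedOn {α : Type*} [Preorder α] [TopologicalSpace α]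
    [SupConvergenceClass α] {s : Set α} {a : α} (hs : IsClosed s)
    (hd : DirectedOn (· ≤ ·) s) (hne : s.Nonempty) (ha : IsLUB s a) : a ∈ s := by
  have := hd.isDirectedOrder
  have := hne.to_subtype
  exact hs.mem_of_tendsto (SupConvergenceClass.tendsto_coe_atTop_isLUB a s ha)
    (Eventually.of_forall Subtype.property)

section Orthant

variable {ι : Type*} {Φ : (ι → ℝ) → ι → ℝ}

def nonnegPostfixed (Φ : (ι → ℝ) → ι → ℝ) : Set (ι → ℝ) := {z | 0 ≤ z ∧ z ≤ Φ z}

def postfixedComponent (Φ : (ι → ℝ) → ι → ℝ) : Set (ι → ℝ) :=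
  connectedComponentIn (nonnegPostfixed Φ) 0

theorem zero_mem_postfixedComponent (hΦ : MapsTo Φ (Ici 0) (Ici 0)) :
    0 ∈ postfixedComponent Φ :=
  mem_connectedComponentIn ⟨le_rfl, hΦ (mem_Ici.2 le_rfl)⟩

theorem postfixedComponent_subset : postfixedComponent Φ ⊆ nonnegPostfixed Φ :=
  connectedComponentIn_subset _ _

theorem isClosed_nonnegPostfixed (hΦ : ContinuousOn Φ (Ici 0)) :
    IsClosed (nonnegPostfixed Φ) :=
  (continuousOn_id.prodMk hΦ).preimage_isClosed_of_isClosed isClosed_Ici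
    (isClosed_le continuous_fst continuous_snd)

theorem Icc_subset_nonnegPostfixed (hΦ : MonotoneOn Φ (Ici 0)) {z : ι → ℝ}
    (hz : z ∈ nonnegPostfixed Φ) : Icc z (Φ z) ⊆ nonnegPostfixed Φ := by
  rintro u ⟨hzu, huΦ⟩
  have hu : 0 ≤ u := hz.1.trans hzu
  exact ⟨hu, huΦ.trans (hΦ hz.1 hu hzu)⟩

theorem sup_mem_nonnegPostfixed (hΦ : MonotoneOn Φ (Ici 0)) {z z' : ι → ℝ}
    (hz : z ∈ nonnegPostfixed Φ) (hz' : z' ∈ nonnegPostfixed Φ) :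
    z ⊔ z' ∈ nonnegPostfixed Φ := by
  have hsup : 0 ≤ z ⊔ z' := hz.1.trans le_sup_left
  exact ⟨hsup, sup_le (hz.2.trans (hΦ hz.1 hsup le_sup_left))
    (hz'.2.trans (hΦ hz'.1 hsup le_sup_right))⟩

theorem mapsTo_postfixedComponent (hΦ : MonotoneOn Φ (Ici 0)) :
    MapsTo Φ (postfixedComponent Φ) (postfixedComponent Φ) := fun z hz =>
  have hzP := postfixedComponent_subset hz
  (convex_Icc z (Φ z)).isPreconnected.subset_connectedComponentIn_of_mem
    (Icc_subset_nonnegPostfixed hΦ hzP) (left_mem_Icc.2 hzP.2) hz (right_mem_Icc.2 hzP.2)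

theorem supClosed_postfixedComponent (hΦ : MonotoneOn Φ (Ici 0)) :
    SupClosed (postfixedComponent Φ) := fun z hz z' hz' => by
  have hcont : Continuous (z ⊔ ·) :=
    continuous_pi fun i => continuous_const.sup (continuous_apply i)
  refine (isPreconnected_connectedComponentIn.image _ hcont.continuousOn
    ).subset_connectedComponentIn_of_mem ?_ ⟨z, hz, sup_idem z⟩ hz (mem_image_of_mem _ hz')
  rintro _ ⟨u, hu, rfl⟩
  exact sup_mem_nonnegPostfixed hΦ (postfixedComponent_subset hz) (postfixedComponent_subset hu)

theorem isClosed_postfixedComponent (hΦ : ContinuousOn Φ (Ici 0)) :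
    IsClosed (postfixedComponent Φ) :=
  (isClosed_nonnegPostfixed hΦ).connectedComponentIn 0

theorem bddAbove_postfixedComponent (hΦ : BddAbove (Φ '' Ici 0)) :
    BddAbove (postfixedComponent Φ) := by
  obtain ⟨M, hM⟩ := hΦ
  refine ⟨M, fun z hz => ?_⟩
  have hzP := postfixedComponent_subset hz
  exact hzP.2.trans (hM (mem_image_of_mem Φ hzP.1))

theorem isLUB_postfixedComponent_mem (hmono : MonotoneOn Φ (Ici 0))
    (hcont : ContinuousOn Φ (Ici 0)) (hmaps : MapsTo Φ (Ici 0) (Ici 0)) {a : ι → ℝ}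
    (ha : IsLUB (postfixedComponent Φ) a) :
    a ∈ postfixedComponent Φ ∧ IsFixedPt Φ a := by
  have hmem : a ∈ postfixedComponent Φ :=
    (isClosed_postfixedComponent hcont).isLUB_mem_of_directedOn
      (supClosed_postfixedComponent hmono).directedOn ⟨0, zero_mem_postfixedComponent hmaps⟩ ha
  exact ⟨hmem, le_antisymm (ha.1 (mapsTo_postfixedComponent hmono hmem))
    (postfixedComponent_subset hmem).2⟩

theorem exists_isLeast_fixedPt_mem_postfixedComponent (hmono : MonotoneOn Φ (Ici 0))
    (hcont : ContinuousOn Φ (Ici 0)) (hmaps : MapsTo Φ (Ici 0) (Ici 0))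
    (hbdd : BddAbove (Φ '' Ici 0)) :
    ∃ zh, IsLeast {z | 0 ≤ z ∧ IsFixedPt Φ z} zh ∧ zh ∈ postfixedComponent Φ := by
  set P₀ := postfixedComponent Φ
  have hiter : ∀ n, Φ^[n] 0 ∈ P₀ := fun n =>
    (mapsTo_postfixedComponent hmono).iterate n (zero_mem_postfixedComponent hmaps)
  have hsucc : ∀ n, Φ^[n + 1] 0 = Φ (Φ^[n] 0) := fun n => iterate_succ_apply' Φ n 0
  have hmono_iter : Monotone fun n => Φ^[n] 0 := monotone_nat_of_le_succ fun n =>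
    (hsucc n).symm ▸ (postfixedComponent_subset (hiter n)).2
  have hbdd_iter : BddAbove (range fun n => Φ^[n] 0) :=
    (bddAbove_postfixedComponent hbdd).mono (range_subset_iff.2 hiter)
  set zh := ⨆ n, Φ^[n] 0
  have hlim : Tendsto (fun n => Φ^[n] 0) atTop (𝓝 zh) := tendsto_atTop_ciSup hmono_iter hbdd_iter
  have hzh : zh ∈ P₀ := (isClosed_postfixedComponent hcont).mem_of_tendsto hlim
    (Eventually.of_forall hiter)
  have hzh0 : 0 ≤ zh := (postfixedComponent_subset hzh).1
  have hlimΦ : Tendsto (fun n => Φ (Φ^[n] 0)) atTop (𝓝 (Φ zh)) :=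
    (hcont zh hzh0).tendsto.comp (tendsto_nhdsWithin_iff.2
      ⟨hlim, Eventually.of_forall fun n => (postfixedComponent_subset (hiter n)).1⟩)
  have hfix : IsFixedPt Φ zh := tendsto_nhds_unique hlimΦ <| by
    simpa only [hsucc] using (tendsto_add_atTop_iff_nat 1).2 hlim
  refine ⟨zh, ⟨⟨hzh0, hfix⟩, fun z ⟨hz0, hzfix⟩ => ciSup_le fun n => ?_⟩, hzh⟩
  induction n with
  | zero => exact hz0
  | succ n ih =>
    rw [hsucc, ← hzfix]
    exact hmono (postfixedComponent_subset (hiter n)).1 hz0 ih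

end Orthant

section Poisson

theorem poisProb_nonneg {q : ℝ} (hq : 0 ≤ q) (k : ℕ) : 0 ≤ poisProb q k := by
  unfold poisProb; positivity

theorem hasSum_poisProb {q : ℝ} (hq : 0 ≤ q) : HasSum (poisProb q) 1 :=
  ProbabilityTheory.hasSum_one_poissonMeasure ⟨q, hq⟩

theorem poisProb_le_pow_div_factorial {q b : ℝ} (hq : 0 ≤ q) (hqb : q ≤ b) (k : ℕ) :
    poisProb q k ≤ b ^ k / k.factorial := by
  unfold poisProb
  gcongr
  calc Real.exp (-q) * q ^ k ≤ 1 * q ^ k := by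
        gcongr; exact Real.exp_le_one_iff.2 (neg_nonpos.2 hq)
    _ ≤ b ^ k := by rw [one_mul]; gcongr

theorem hasDerivAt_poisProb_succ (n : ℕ) (x : ℝ) :
    HasDerivAt (fun q => poisProb q (n + 1)) (poisProb x n - poisProb x (n + 1)) x := by
  refine (((hasDerivAt_neg x).exp.fun_mul (hasDerivAt_pow (n + 1) x)).div_const
    ((n + 1).factorial : ℝ)).congr_deriv ?_
  simp only [poisProb, Nat.factorial_succ, Nat.cast_mul, Nat.add_sub_cancel]
  field_simp
  ring

theorem hasDerivAt_sum_range_poisProb (m : ℕ) (x : ℝ) :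
    HasDerivAt (fun q => ∑ n ∈ Finset.range (m + 1), poisProb q n) (-poisProb x m) x := by
  induction m with
  | zero =>
    simpa [poisProb] using (hasDerivAt_neg x).exp
  | succ m ih =>
    simp only [Finset.sum_range_succ _ (m + 1)]
    exact (ih.fun_add (hasDerivAt_poisProb_succ m x)).congr_deriv (by ring)

theorem antitoneOn_sum_range_poisProb (m : ℕ) :
    AntitoneOn (fun q => ∑ n ∈ Finset.range m, poisProb q n) (Ici 0) := by
  cases m with
  | zero => simp [antitoneOn_const]
  | succ m =>
    have hd := hasDerivAt_sum_range_poisProb m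
    refine antitoneOn_of_deriv_nonpos (convex_Ici 0)
      (HasDerivAt.continuousOn fun x _ => hd x)
      (fun x _ => (hd x).differentiableAt.differentiableWithinAt) fun x hx => ?_
    rw [(hd x).deriv, neg_nonpos]
    exact poisProb_nonneg (interior_subset hx) m

-- An upper set of `ℕ` is empty or `Ici m`, and the mass of `Ici m` is one minus that of `range m`.
theorem monotoneOn_tsum_indicator_poisProb {S : Set ℕ} (hS : IsUpperSet S) :
    MonotoneOn (fun q => ∑' n, S.indicator (poisProb q) n) (Ici 0) := by
  obtain rfl | ⟨m, rfl⟩ := hS.eq_empty_or_Ici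
  · simp [monotoneOn_const]
  have htail : ∀ q : ℝ, 0 ≤ q →
      ∑' n, (Ici m).indicator (poisProb q) n = 1 - ∑ n ∈ Finset.range m, poisProb q n := by
    intro q hq
    have h := (hasSum_poisProb hq).summable.sum_add_tsum_compl (s := Finset.range m)
    rw [(hasSum_poisProb hq).tsum_eq, tsum_subtype] at h
    have hcompl : ((Finset.range m : Set ℕ))ᶜ = Ici m := by ext; simp
    rw [hcompl] at h
    linarith
  intro a ha b hb hab
  simp only [htail a ha, htail b hb]
  linarith [antitoneOn_sum_range_poisProb m ha hb hab]

end Poisson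

theorem monotone_funSplitAt_symm {ι β : Type*} [Preorder β] [DecidableEq ι] (s : ι)
    (k' : {t // t ≠ s} → β) : Monotone fun n => (Equiv.funSplitAt s β).symm (n, k') :=
  fun n m hnm t => by
    simp only [Equiv.funSplitAt_symm_apply]
    split_ifs
    exacts [hnm, le_rfl]

section PoissonPi

variable {ι : Type*} [Fintype ι]

noncomputable def poisProbPi (q : ι → ℝ) (k : ι → ℕ) : ℝ := ∏ s, poisProb (q s) (k s)

theorem sum_prod_le_of_sum_le {κ : Type*} {f : ι → κ → ℝ} {c : ι → ℝ} (hf : ∀ s n, 0 ≤ f s n)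
    (hc : ∀ s (F : Finset κ), ∑ n ∈ F, f s n ≤ c s) (F : Finset (ι → κ)) :
    ∑ k ∈ F, ∏ s, f s (k s) ≤ ∏ s, c s := by
  classical
  calc ∑ k ∈ F, ∏ s, f s (k s)
      ≤ ∑ k ∈ Fintype.piFinset fun s => F.image (· s), ∏ s, f s (k s) :=
        Finset.sum_le_sum_of_subset_of_nonneg
          (fun k hk => Fintype.mem_piFinset.2 fun s => Finset.mem_image_of_mem _ hk)
          fun k _ _ => Finset.prod_nonneg fun s _ => hf s _
    _ = ∏ s, ∑ n ∈ F.image (· s), f s n := (Finset.prod_univ_sum _ _).symm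
    _ ≤ ∏ s, c s := Finset.prod_le_prod (fun s _ => Finset.sum_nonneg fun n _ => hf s n)
        fun s _ => hc s _

theorem summable_prod_of_sum_le {κ : Type*} {f : ι → κ → ℝ} {c : ι → ℝ} (hf : ∀ s n, 0 ≤ f s n)
    (hc : ∀ s (F : Finset κ), ∑ n ∈ F, f s n ≤ c s) :
    Summable fun k : ι → κ => ∏ s, f s (k s) :=
  summable_of_sum_le (fun k => Finset.prod_nonneg fun s _ => hf s (k s))
    (sum_prod_le_of_sum_le hf hc)

theorem poisProbPi_nonneg {q : ι → ℝ} (hq : 0 ≤ q) (k : ι → ℕ) : 0 ≤ poisProbPi q k :=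
  Finset.prod_nonneg fun s _ => poisProb_nonneg (hq s) _

theorem sum_poisProbPi_le_one {q : ι → ℝ} (hq : 0 ≤ q) (F : Finset (ι → ℕ)) :
    ∑ k ∈ F, poisProbPi q k ≤ 1 := by
  simpa [poisProbPi] using sum_prod_le_of_sum_le (c := 1) (fun s => poisProb_nonneg (hq s))
    (fun s F => sum_le_hasSum F (fun n _ => poisProb_nonneg (hq s) n) (hasSum_poisProb (hq s))) F

theorem summable_poisProbPi {q : ι → ℝ} (hq : 0 ≤ q) : Summable (poisProbPi q) :=
  summable_of_sum_le (poisProbPi_nonneg hq) (sum_poisProbPi_le_one hq)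

theorem tsum_poisProbPi_le_one {q : ι → ℝ} (hq : 0 ≤ q) : ∑' k, poisProbPi q k ≤ 1 :=
  (summable_poisProbPi hq).tsum_le_of_sum_le (sum_poisProbPi_le_one hq)

theorem tsum_indicator_poisProbPi_nonneg {q : ι → ℝ} (hq : 0 ≤ q) (U : Set (ι → ℕ)) :
    0 ≤ ∑' k, U.indicator (poisProbPi q) k :=
  tsum_nonneg fun k => indicator_nonneg (fun k _ => poisProbPi_nonneg hq k) k

theorem tsum_indicator_poisProbPi_le_one {q : ι → ℝ} (hq : 0 ≤ q) (U : Set (ι → ℕ)) :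
    ∑' k, U.indicator (poisProbPi q) k ≤ 1 :=
  ((summable_poisProbPi hq).indicator U).tsum_le_tsum
    (indicator_le_self' fun k _ => poisProbPi_nonneg hq k) (summable_poisProbPi hq)
  |>.trans (tsum_poisProbPi_le_one hq)

theorem poisProbPi_update_funSplitAt_symm [DecidableEq ι] (q : ι → ℝ) (s : ι) (x : ℝ) (n : ℕ)
    (k' : {t // t ≠ s} → ℕ) :
    poisProbPi (update q s x) ((Equiv.funSplitAt s ℕ).symm (n, k')) =
      poisProb x n * poisProbPi (fun t : {t // t ≠ s} => q t) k' := by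
  rw [poisProbPi, Fintype.prod_eq_mul_prod_subtype_ne _ s]
  simp only [update_self, Equiv.funSplitAt_symm_apply, dite_true]
  refine congrArg (_ * ·) (Finset.prod_congr rfl fun t _ => ?_)
  rw [update_of_ne t.2, dif_neg t.2]

theorem hasSum_tsum_indicator_poisProbPi_update [DecidableEq ι] (U : Set (ι → ℕ)) {q : ι → ℝ}
    (hq : 0 ≤ q) (s : ι) {x : ℝ} (hx : 0 ≤ x) :
    HasSum (fun k' : {t // t ≠ s} → ℕ => poisProbPi (fun t : {t // t ≠ s} => q t) k' *
        ∑' n, ((fun n => (Equiv.funSplitAt s ℕ).symm (n, k')) ⁻¹' U).indicator (poisProb x) n)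
      (∑' k, U.indicator (poisProbPi (update q s x)) k) := by
  let e : ({t // t ≠ s} → ℕ) × ℕ ≃ (ι → ℕ) :=
    ((Equiv.funSplitAt s ℕ).trans (Equiv.prodComm _ _)).symm
  have hqx : 0 ≤ update q s x := fun t => by
    by_cases ht : t = s
    · subst ht; simpa using hx
    · simpa [ht] using hq t
  have hsum : Summable fun p => U.indicator (poisProbPi (update q s x)) (e p) :=
    e.summable_iff.2 ((summable_poisProbPi hqx).indicator U)
  have hfiber : ∀ k', ∑' n, U.indicator (poisProbPi (update q s x)) (e (k', n)) =
      poisProbPi (fun t : {t // t ≠ s} => q t) k' *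
        ∑' n, ((fun n => (Equiv.funSplitAt s ℕ).symm (n, k')) ⁻¹' U).indicator (poisProb x) n := by
    intro k'
    rw [← tsum_mul_left]
    refine tsum_congr fun n => ?_
    change U.indicator _ ((Equiv.funSplitAt s ℕ).symm (n, k')) = _
    classical
    simp only [indicator_apply, mem_preimage]
    split_ifs
    · rw [mul_comm]
      exact poisProbPi_update_funSplitAt_symm q s x n k'
    · rw [mul_zero]
  refine (hsum.prod.congr hfiber).hasSum_iff.2 ?_
  rw [← tsum_congr hfiber, ← hsum.tsum_prod' hsum.prod_factor, e.tsum_eq]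

theorem tsum_indicator_poisProbPi_update_le [DecidableEq ι] {U : Set (ι → ℕ)}
    (hU : IsUpperSet U) {q : ι → ℝ} (hq : 0 ≤ q) (s : ι) {a b : ℝ} (ha : 0 ≤ a) (hab : a ≤ b) :
    ∑' k, U.indicator (poisProbPi (update q s a)) k ≤
      ∑' k, U.indicator (poisProbPi (update q s b)) k := by
  refine hasSum_le (fun k' => mul_le_mul_of_nonneg_left ?_
    (poisProbPi_nonneg (q := fun t : {t // t ≠ s} => q t) (fun t => hq t) k'))
    (hasSum_tsum_indicator_poisProbPi_update U hq s ha)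
    (hasSum_tsum_indicator_poisProbPi_update U hq s (ha.trans hab))
  exact monotoneOn_tsum_indicator_poisProb (hU.preimage (monotone_funSplitAt_symm s k'))
    ha (ha.trans hab) hab

theorem monotoneOn_tsum_indicator_poisProbPi {U : Set (ι → ℕ)} (hU : IsUpperSet U) :
    MonotoneOn (fun q => ∑' k, U.indicator (poisProbPi q) k) (Ici 0) := by
  classical
  intro q hq q' hq' hqq'
  have hstep : ∀ S : Finset ι, ∑' k, U.indicator (poisProbPi q) k ≤
      ∑' k, U.indicator (poisProbPi (S.piecewise q' q)) k := by
    intro S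
    induction S using Finset.induction_on with
    | empty => rw [Finset.piecewise_empty]
    | insert i S hi ih =>
      have hmix : 0 ≤ S.piecewise q' q := fun t => by
        by_cases ht : t ∈ S
        · simpa [ht] using hq' t
        · simpa [ht] using hq t
      have hupd : S.piecewise q' q = update (S.piecewise q' q) i (q i) := by
        rw [← Finset.piecewise_eq_of_notMem S q' q hi, update_eq_self]
      rw [Finset.piecewise_insert]
      refine ih.trans ?_
      nth_rewrite 1 [hupd]
      exact tsum_indicator_poisProbPi_update_le hU hmix i (hq i) (hqq' i)
  simpa only [Finset.piecewise_univ] using hstep Finset.univ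

theorem continuousOn_Icc_tsum_indicator_poisProbPi (U : Set (ι → ℕ)) (b : ι → ℝ) :
    ContinuousOn (fun q => ∑' k, U.indicator (poisProbPi q) k) (Icc 0 b) := by
  rcases isEmpty_or_nonempty (Icc (0 : ι → ℝ) b) with hbox | ⟨q₀, hq₀⟩
  · rw [isEmpty_coe_sort.1 hbox]
    exact continuousOn_empty _
  have hb : 0 ≤ b := hq₀.1.trans hq₀.2
  have hterm : ∀ s n, 0 ≤ b s ^ n / (n.factorial : ℝ) := fun s n =>
    div_nonneg (pow_nonneg (hb s) n) (Nat.cast_nonneg _)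
  have hpartial : ∀ s (F : Finset ℕ),
      ∑ n ∈ F, b s ^ n / (n.factorial : ℝ) ≤ ∑' n, b s ^ n / (n.factorial : ℝ) := fun s F =>
    (Real.summable_pow_div_factorial _).sum_le_tsum F fun n _ => hterm s n
  have hu := summable_prod_of_sum_le hterm hpartial
  refine continuousOn_tsum (fun k => ?_) hu fun k q hq => ?_
  · by_cases hk : k ∈ U
    · simp only [indicator_of_mem hk, poisProbPi, poisProb]
      fun_prop
    · simp only [indicator_of_notMem hk]
      exact continuousOn_const
  · rw [norm_indicator_eq_indicator_norm]
    refine (indicator_le_self' (fun _ _ => norm_nonneg _) k).trans ?_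
    rw [Real.norm_of_nonneg (poisProbPi_nonneg hq.1 k)]
    exact Finset.prod_le_prod (fun s _ => poisProb_nonneg (hq.1 s) _)
      fun s _ => poisProb_le_pow_div_factorial (hq.1 s) (hq.2 s) _

theorem continuousOn_tsum_indicator_poisProbPi (U : Set (ι → ℕ)) :
    ContinuousOn (fun q => ∑' k, U.indicator (poisProbPi q) k) (Ici 0) := by
  intro q₀ hq₀
  have hIic : Iic (q₀ + 1) ∈ 𝓝 q₀ := by
    rw [← pi_univ_Iic]
    exact set_pi_mem_nhds finite_univ fun s _ => Iic_mem_nhds (by simp)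
  refine (continuousOn_Icc_tsum_indicator_poisProbPi U (q₀ + 1) q₀
    ⟨hq₀, le_add_of_nonneg_right zero_le_one⟩).mono_of_mem_nhdsWithin ?_
  rw [← Ici_inter_Iic]
  exact inter_mem_nhdsWithin _ hIic

end PoissonPi

section Psi

variable {R : ℕ}

def psiEvent (l : WithTop ℤ) : Set (Fin R → ℕ) :=
  {k | l ≤ (((∑ s : Fin R, ((s : ℕ) + 1) * k s : ℕ) : ℤ) : WithTop ℤ)}

theorem isUpperSet_psiEvent (l : WithTop ℤ) : IsUpperSet (psiEvent (R := R) l) := by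
  intro k k' hkk' hk
  refine le_trans (α := WithTop ℤ) hk ?_
  have : ∑ s : Fin R, ((s : ℕ) + 1) * k s ≤ ∑ s : Fin R, ((s : ℕ) + 1) * k' s :=
    Finset.sum_le_sum fun s _ => Nat.mul_le_mul_left _ (hkk' s)
  exact_mod_cast this

theorem psiMulti_eq_tsum_indicator (q : Fin R → ℝ) (l : WithTop ℤ) :
    psiMulti q l = ∑' k, (psiEvent l).indicator (poisProbPi q) k := by
  unfold psiMulti
  congr 1
  ext k
  simp [psiEvent, indicator, poisProbPi]

theorem psiMulti_nonneg {q : Fin R → ℝ} (hq : 0 ≤ q) (l : WithTop ℤ) : 0 ≤ psiMulti q l :=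
  psiMulti_eq_tsum_indicator q l ▸ tsum_indicator_poisProbPi_nonneg hq _

theorem psiMulti_le_one {q : Fin R → ℝ} (hq : 0 ≤ q) (l : WithTop ℤ) : psiMulti q l ≤ 1 :=
  psiMulti_eq_tsum_indicator q l ▸ tsum_indicator_poisProbPi_le_one hq _

theorem monotoneOn_psiMulti (l : WithTop ℤ) : MonotoneOn (psiMulti (R := R) · l) (Ici 0) := by
  simpa only [psiMulti_eq_tsum_indicator] using
    monotoneOn_tsum_indicator_poisProbPi (isUpperSet_psiEvent l)

theorem continuousOn_psiMulti (l : WithTop ℤ) : ContinuousOn (psiMulti (R := R) · l) (Ici 0) := by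
  simpa only [psiMulti_eq_tsum_indicator] using continuousOn_tsum_indicator_poisProbPi _

end Psi

theorem ContinuousOn.comp_measurable {α β γ : Type*} [MeasurableSpace α] [TopologicalSpace β]
    [MeasurableSpace β] [OpensMeasurableSpace β] [TopologicalSpace γ] [MeasurableSpace γ]
    [BorelSpace γ] {g : β → γ} {s : Set β} (hg : ContinuousOn g s) {f : α → β}
    (hf : Measurable f) (hfs : ∀ a, f a ∈ s) : Measurable (g ∘ f) :=
  hg.domRestrict.measurable.comp (hf.subtype_mk (h := hfs))

section Expectation

variable {Ω : Type*} {R T : ℕ}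

local notation "V" => Fin R × Fin T × Fin T

noncomputable def psiRates (Wm : Ω → Fin R → Fin T → ℝ) (z : V → ℝ)
    (β : Fin T) (ω : Ω) : Fin R → ℝ :=
  fun s => ∑ γ, Wm ω s γ * z (s, β, γ)

noncomputable def phiIntegrand (Wm Wp : Ω → Fin R → Fin T → ℝ) (C : Ω → WithTop ℕ)
    (A : Ω → Fin T) (z : V → ℝ) (v : V) (ω : Ω) : ℝ :=
  if A ω = v.2.2 then Wp ω v.1 v.2.1 * psiMulti (psiRates Wm z v.2.2 ω) (natCastTop (C ω)) else 0

noncomputable def phiV [MeasureSpace Ω] (Wm Wp : Ω → Fin R → Fin T → ℝ) (C : Ω → WithTop ℕ)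
    (A : Ω → Fin T) (z : V → ℝ) : V → ℝ :=
  fun v => ∫ ω, phiIntegrand Wm Wp C A z v ω

variable {Wm Wp : Ω → Fin R → Fin T → ℝ} {C : Ω → WithTop ℕ} {A : Ω → Fin T}

theorem fV_eq_phiV_sub [MeasureSpace Ω] (v : V) (z : V → ℝ) :
    fV Wm Wp C A v z = phiV Wm Wp C A z v - z v := rfl

theorem forall_fV_eq_zero_iff [MeasureSpace Ω] {z : V → ℝ} :
    (∀ v, fV Wm Wp C A v z = 0) ↔ IsFixedPt (phiV Wm Wp C A) z := by
  simp only [fV_eq_phiV_sub, sub_eq_zero, IsFixedPt, funext_iff]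

theorem nonnegV_eq_Ici : nonnegV R T = Ici 0 := rfl

theorem PsetV_eq_nonnegPostfixed [MeasureSpace Ω] :
    PsetV Wm Wp C A = nonnegPostfixed (phiV Wm Wp C A) := by
  ext z
  simp only [PsetV, nonnegPostfixed, nonnegV_eq_Ici, fV_eq_phiV_sub, sub_nonneg, mem_ofPred_eq,
    mem_Ici, Pi.le_def]

theorem P0V_eq_postfixedComponent [MeasureSpace Ω] :
    P0V Wm Wp C A = postfixedComponent (phiV Wm Wp C A) := by
  rw [P0V, PsetV_eq_nonnegPostfixed, postfixedComponent]

theorem psiRates_nonneg (hWm : ∀ ω r α, 0 ≤ Wm ω r α) {z : V → ℝ}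
    (hz : 0 ≤ z) (β : Fin T) (ω : Ω) : 0 ≤ psiRates Wm z β ω := fun s =>
  Finset.sum_nonneg fun γ _ => mul_nonneg (hWm ω s γ) (hz _)

theorem psiRates_mono (hWm : ∀ ω r α, 0 ≤ Wm ω r α) {z z' : V → ℝ}
    (hzz' : z ≤ z') (β : Fin T) (ω : Ω) : psiRates Wm z β ω ≤ psiRates Wm z' β ω := fun s =>
  Finset.sum_le_sum fun γ _ => mul_le_mul_of_nonneg_left (hzz' _) (hWm ω s γ)

theorem continuous_psiRates (β : Fin T) (ω : Ω) : Continuous fun z => psiRates Wm z β ω :=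
  continuous_pi fun _ => continuous_finsetSum _ fun _ _ => continuous_const.mul (continuous_apply _)

theorem measurable_psiRates [MeasurableSpace Ω] (hWm : ∀ r α, Measurable fun ω => Wm ω r α)
    (z : V → ℝ) (β : Fin T) : Measurable (psiRates Wm z β) :=
  measurable_pi_lambda _ fun s => Finset.measurable_sum _ fun γ _ => (hWm s γ).mul_const _

theorem phiIntegrand_nonneg (hWm : ∀ ω r α, 0 ≤ Wm ω r α) (hWp : ∀ ω r α, 0 ≤ Wp ω r α)
    {z : V → ℝ} (hz : 0 ≤ z) (v : V) (ω : Ω) :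
    0 ≤ phiIntegrand Wm Wp C A z v ω := by
  unfold phiIntegrand
  split_ifs
  · exact mul_nonneg (hWp ω _ _) (psiMulti_nonneg (psiRates_nonneg hWm hz _ ω) _)
  · exact le_rfl

theorem phiIntegrand_le (hWm : ∀ ω r α, 0 ≤ Wm ω r α) (hWp : ∀ ω r α, 0 ≤ Wp ω r α)
    {z : V → ℝ} (hz : 0 ≤ z) (v : V) (ω : Ω) :
    phiIntegrand Wm Wp C A z v ω ≤ Wp ω v.1 v.2.1 := by
  unfold phiIntegrand
  split_ifs
  · exact mul_le_of_le_one_right (hWp ω _ _) (psiMulti_le_one (psiRates_nonneg hWm hz _ ω) _)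
  · exact hWp ω _ _

theorem norm_phiIntegrand_le (hWm : ∀ ω r α, 0 ≤ Wm ω r α) (hWp : ∀ ω r α, 0 ≤ Wp ω r α)
    {z : V → ℝ} (hz : 0 ≤ z) (v : V) (ω : Ω) :
    ‖phiIntegrand Wm Wp C A z v ω‖ ≤ Wp ω v.1 v.2.1 := by
  rw [Real.norm_of_nonneg (phiIntegrand_nonneg hWm hWp hz v ω)]
  exact phiIntegrand_le hWm hWp hz v ω

theorem phiIntegrand_mono (hWm : ∀ ω r α, 0 ≤ Wm ω r α) (hWp : ∀ ω r α, 0 ≤ Wp ω r α)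
    {z z' : V → ℝ} (hz : 0 ≤ z) (hzz' : z ≤ z')
    (v : V) (ω : Ω) :
    phiIntegrand Wm Wp C A z v ω ≤ phiIntegrand Wm Wp C A z' v ω := by
  unfold phiIntegrand
  split_ifs
  · exact mul_le_mul_of_nonneg_left (monotoneOn_psiMulti _ (psiRates_nonneg hWm hz _ ω)
      (psiRates_nonneg hWm (hz.trans hzz') _ ω) (psiRates_mono hWm hzz' _ ω)) (hWp ω _ _)
  · exact le_rfl

theorem continuousWithinAt_phiIntegrand (hWm : ∀ ω r α, 0 ≤ Wm ω r α)
    {z₀ : V → ℝ} (hz₀ : 0 ≤ z₀) (v : V) (ω : Ω) :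
    ContinuousWithinAt (fun z => phiIntegrand Wm Wp C A z v ω) (Ici 0) z₀ := by
  unfold phiIntegrand
  split_ifs
  · exact continuousWithinAt_const.mul <| ContinuousWithinAt.comp
      (f := fun z => psiRates Wm z v.2.2 ω) (g := (psiMulti · (natCastTop (C ω))))
      (continuousOn_psiMulti _ _ (psiRates_nonneg hWm hz₀ v.2.2 ω))
      (continuous_psiRates v.2.2 ω).continuousWithinAt
      fun z hz => psiRates_nonneg hWm hz v.2.2 ω
  · exact continuousWithinAt_const

theorem measurable_phiIntegrand [MeasurableSpace Ω] (hWm : ∀ ω r α, 0 ≤ Wm ω r α)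
    (hWm_meas : ∀ r α, Measurable fun ω => Wm ω r α)
    (hWp_meas : ∀ r α, Measurable fun ω => Wp ω r α) (hA : Measurable A)
    (hC : ∀ l : WithTop ℕ, MeasurableSet {ω | C ω = l})
    {z : V → ℝ} (hz : 0 ≤ z) (v : V) :
    Measurable (phiIntegrand Wm Wp C A z v) := by
  have hpsi : ∀ l, Measurable fun ω => psiMulti (psiRates Wm z v.2.2 ω) l := fun l =>
    (continuousOn_psiMulti l).comp_measurable (measurable_psiRates hWm_meas z _)
      fun ω => psiRates_nonneg hWm hz _ ω
  have hpsiC : Measurable fun ω => psiMulti (psiRates Wm z v.2.2 ω) (natCastTop (C ω)) :=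
    (measurable_from_prod_countable_left
      (f := fun p : Ω × WithTop ℕ => psiMulti (psiRates Wm z v.2.2 p.1) (natCastTop p.2))
      fun l => hpsi (natCastTop l)).comp (measurable_id.prodMk (measurable_to_countable' hC))
  exact Measurable.ite (hA (measurableSet_singleton _)) ((hWp_meas _ _).mul hpsiC)
    measurable_const

section PhiV

variable [MeasureSpace Ω]

theorem integrable_phiIntegrand (hWm : ∀ ω r α, 0 ≤ Wm ω r α) (hWp : ∀ ω r α, 0 ≤ Wp ω r α)
    (hWm_meas : ∀ r α, Measurable fun ω => Wm ω r α)
    (hWp_meas : ∀ r α, Measurable fun ω => Wp ω r α) (hA : Measurable A)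
    (hC : ∀ l : WithTop ℕ, MeasurableSet {ω | C ω = l})
    (hWp_int : ∀ r α, Integrable fun ω => Wp ω r α)
    {z : V → ℝ} (hz : 0 ≤ z) (v : V) :
    Integrable (phiIntegrand Wm Wp C A z v) :=
  (hWp_int v.1 v.2.1).mono'
    (measurable_phiIntegrand hWm hWm_meas hWp_meas hA hC hz v).aestronglyMeasurable
    (ae_of_all _ (norm_phiIntegrand_le hWm hWp hz v))

theorem mapsTo_phiV (hWm : ∀ ω r α, 0 ≤ Wm ω r α) (hWp : ∀ ω r α, 0 ≤ Wp ω r α) :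
    MapsTo (phiV Wm Wp C A) (Ici 0) (Ici 0) := fun _ hz v =>
  integral_nonneg (phiIntegrand_nonneg hWm hWp hz v)

theorem bddAbove_phiV (hWm : ∀ ω r α, 0 ≤ Wm ω r α) (hWp : ∀ ω r α, 0 ≤ Wp ω r α)
    (hWm_meas : ∀ r α, Measurable fun ω => Wm ω r α)
    (hWp_meas : ∀ r α, Measurable fun ω => Wp ω r α) (hA : Measurable A)
    (hC : ∀ l : WithTop ℕ, MeasurableSet {ω | C ω = l})
    (hWp_int : ∀ r α, Integrable fun ω => Wp ω r α) :
    BddAbove (phiV Wm Wp C A '' Ici 0) := by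
  refine ⟨fun v => ∫ ω, Wp ω v.1 v.2.1, ?_⟩
  rintro _ ⟨z, hz, rfl⟩ v
  exact integral_mono (integrable_phiIntegrand hWm hWp hWm_meas hWp_meas hA hC hWp_int hz v)
    (hWp_int v.1 v.2.1) (phiIntegrand_le hWm hWp hz v)

theorem monotoneOn_phiV (hWm : ∀ ω r α, 0 ≤ Wm ω r α) (hWp : ∀ ω r α, 0 ≤ Wp ω r α)
    (hWm_meas : ∀ r α, Measurable fun ω => Wm ω r α)
    (hWp_meas : ∀ r α, Measurable fun ω => Wp ω r α) (hA : Measurable A)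
    (hC : ∀ l : WithTop ℕ, MeasurableSet {ω | C ω = l})
    (hWp_int : ∀ r α, Integrable fun ω => Wp ω r α) :
    MonotoneOn (phiV Wm Wp C A) (Ici 0) := fun _ hz _ hz' hzz' v =>
  integral_mono (integrable_phiIntegrand hWm hWp hWm_meas hWp_meas hA hC hWp_int hz v)
    (integrable_phiIntegrand hWm hWp hWm_meas hWp_meas hA hC hWp_int hz' v)
    (phiIntegrand_mono hWm hWp hz hzz' v)

theorem continuousOn_phiV (hWm : ∀ ω r α, 0 ≤ Wm ω r α) (hWp : ∀ ω r α, 0 ≤ Wp ω r α)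
    (hWm_meas : ∀ r α, Measurable fun ω => Wm ω r α)
    (hWp_meas : ∀ r α, Measurable fun ω => Wp ω r α) (hA : Measurable A)
    (hC : ∀ l : WithTop ℕ, MeasurableSet {ω | C ω = l})
    (hWp_int : ∀ r α, Integrable fun ω => Wp ω r α) :
    ContinuousOn (phiV Wm Wp C A) (Ici 0) := by
  refine continuousOn_pi.2 fun v z₀ hz₀ => ?_
  refine tendsto_integral_filter_of_dominated_convergence (fun ω => Wp ω v.1 v.2.1)
    (eventually_nhdsWithin_of_forall fun z hz =>
      (measurable_phiIntegrand hWm hWm_meas hWp_meas hA hC hz v).aestronglyMeasurable)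
    (eventually_nhdsWithin_of_forall fun z hz => ae_of_all _ (norm_phiIntegrand_le hWm hWp hz v))
    (hWp_int v.1 v.2.1) (ae_of_all _ fun ω => continuousWithinAt_phiIntegrand hWm hz₀ v ω)

end PhiV

end Expectation

theorem stmt_3_general
    {Ω : Type*} [MeasureSpace Ω]
    {R T : ℕ}
    (Wm Wp : Ω → Fin R → Fin T → ℝ) (C : Ω → WithTop ℕ) (A : Ω → Fin T)
    (hWm_nonneg : ∀ ω r α, 0 ≤ Wm ω r α) (hWp_nonneg : ∀ ω r α, 0 ≤ Wp ω r α)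
    (hWm_meas : ∀ r α, Measurable fun ω => Wm ω r α)
    (hWp_meas : ∀ r α, Measurable fun ω => Wp ω r α)
    (hA_meas : Measurable A)
    (hC_meas : ∀ l : WithTop ℕ, MeasurableSet {ω | C ω = l})
    (hWp_int : ∀ r α, Integrable fun ω => Wp ω r α)
    :
    (∃ zhat : (Fin R × Fin T × Fin T) → ℝ,
      zhat ∈ nonnegV R T ∧ (∀ v, fV Wm Wp C A v zhat = 0) ∧
      (∀ zbar ∈ nonnegV R T, (∀ v, fV Wm Wp C A v zbar = 0) → ∀ v, zhat v ≤ zbar v) ∧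
      zhat ∈ P0V Wm Wp C A) ∧
    (∀ v, fV Wm Wp C A v (zStarV Wm Wp C A) = 0) ∧
    zStarV Wm Wp C A ∈ P0V Wm Wp C A := by
  have hmono := monotoneOn_phiV hWm_nonneg hWp_nonneg hWm_meas hWp_meas hA_meas hC_meas hWp_int
  have hcont := continuousOn_phiV hWm_nonneg hWp_nonneg hWm_meas hWp_meas hA_meas hC_meas hWp_int
  have hmaps : MapsTo (phiV Wm Wp C A) (Ici 0) (Ici 0) := mapsTo_phiV hWm_nonneg hWp_nonneg
  have hbdd := bddAbove_phiV hWm_nonneg hWp_nonneg hWm_meas hWp_meas hA_meas hC_meas hWp_int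
  have hP₀ := P0V_eq_postfixedComponent (Wm := Wm) (Wp := Wp) (C := C) (A := A)
  obtain ⟨zh, ⟨⟨hzh0, hzh_fix⟩, hzh_least⟩, hzh⟩ :=
    exists_isLeast_fixedPt_mem_postfixedComponent hmono hcont hmaps hbdd
  have hlub : IsLUB (P0V Wm Wp C A) (zStarV Wm Wp C A) := isLUB_pi.2 fun v =>
    isLUB_csSup ⟨0, 0, hP₀ ▸ zero_mem_postfixedComponent hmaps, rfl⟩
      ((monotone_eval v).map_bddAbove (hP₀ ▸ bddAbove_postfixedComponent hbdd))
  rw [hP₀] at hlub ⊢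
  obtain ⟨hstar, hstar_fix⟩ := isLUB_postfixedComponent_mem hmono hcont hmaps hlub
  refine ⟨⟨zh, hzh0, forall_fV_eq_zero_iff.2 hzh_fix,
    fun zbar hzbar hroot => hzh_least ⟨hzbar, forall_fV_eq_zero_iff.1 hroot⟩, hzh⟩,
    forall_fV_eq_zero_iff.2 hstar_fix, hstar⟩

/-- There is a smallest joint root `ẑ` of the `f^{r,α,β}`; moreover `z*` is a joint root,
and both `ẑ ∈ P₀` and `z* ∈ P₀`. -/
theorem stmt_3
    {Ω : Type*} [MeasureSpace Ω] [IsProbabilityMeasure (volume : Measure Ω)]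
    {R T : ℕ} (hR : 0 < R) (hT : 0 < T)
    (Wm Wp : Ω → Fin R → Fin T → ℝ) (S : Ω → ℝ) (C : Ω → WithTop ℕ) (A : Ω → Fin T)
    (hWm_nonneg : ∀ ω r α, 0 ≤ Wm ω r α) (hWp_nonneg : ∀ ω r α, 0 ≤ Wp ω r α)
    (hS_nonneg : ∀ ω, 0 ≤ S ω)
    (hWm_meas : ∀ r α, Measurable fun ω => Wm ω r α)
    (hWp_meas : ∀ r α, Measurable fun ω => Wp ω r α)
    (hS_meas : Measurable S) (hA_meas : Measurable A)
    (hC_meas : ∀ l : WithTop ℕ, MeasurableSet {ω | C ω = l})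
    (hWm_int : ∀ r α, Integrable fun ω => Wm ω r α)
    (hWp_int : ∀ r α, Integrable fun ω => Wp ω r α)
    (hS_int : Integrable S)
    :
    (∃ zhat : (Fin R × Fin T × Fin T) → ℝ,
      zhat ∈ nonnegV R T ∧ (∀ v, fV Wm Wp C A v zhat = 0) ∧
      (∀ zbar ∈ nonnegV R T, (∀ v, fV Wm Wp C A v zbar = 0) → ∀ v, zhat v ≤ zbar v) ∧
      zhat ∈ P0V Wm Wp C A) ∧
    (∀ v, fV Wm Wp C A v (zStarV Wm Wp C A) = 0) ∧
    zStarV Wm Wp C A ∈ P0V Wm Wp C A :=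
  stmt_3_general Wm Wp C A hWm_nonneg hWp_nonneg hWm_meas hWp_meas hA_meas hC_meas hWp_int
end
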